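/- arXiv:2106.06842 — 2 statements merged into one kernel-verified Lean document; each statement's English description precedes it below -/
import Mathlib

section
/- Let $E$ be a real inner product space, let $J : E \to \mathbb{R}$ be differentiable with gradient $\nabla J$ that is Lipschitz continuous with constant $L > 0$, and let $\phi \in E$. Suppose $g \in E$ is a gradient estimate satisfying $\|g - \nabla J(\phi)\| \le \alpha \|\nabla J(\phi)\|$ for some $0 < \alpha < 1$. Then for every step size $0 < \eta \le \frac{2}{L} \cdot \frac{1-\alpha}{(1+\alpha)^2}$, the ascent step $\phi' = \phi + \eta g$ satisfies $J(\phi') \ge J(\phi)$, i.e. the step does not decrease the objective. -/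
/-!
Along the segment `t ↦ φ + t • u`, Lipschitz continuity of the gradient gives the descent lemma
`J (φ + u) ≥ J φ + ⟪∇J φ, u⟫ - L/2 ‖u‖²`. For `u = η • g` an `α`-accurate estimate makes the
linear term at least `η (1 - α) ‖∇J φ‖²` while `‖u‖ ≤ η (1 + α) ‖∇J φ‖`, and the bound on `η` is
exactly what makes the linear gain dominate the quadratic loss.
-/

open InnerProductSpace

section LipschitzGradient

variable {E : Type*} [NormedAddCommGroup E] [InnerProductSpace ℝ E] [CompleteSpace E]
  {J : E → ℝ} {gradJ : E → E} {L : ℝ}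

theorem HasGradientAt.hasDerivAt_comp_add_smul {x u : E} {t : ℝ} {v : E}
    (h : HasGradientAt J v (x + t • u)) :
    HasDerivAt (fun s : ℝ => J (x + s • u)) ⟪v, u⟫_ℝ t := by
  have hline : HasDerivAt (fun s : ℝ => x + s • u) u t := by
    simpa using ((hasDerivAt_id t).smul_const u).const_add x
  exact h.hasFDerivAt.comp_hasDerivAt t hline

theorem le_apply_add_of_lipschitz_gradient (hgrad : ∀ x, HasGradientAt J (gradJ x) x)
    (hLip : ∀ x y, ‖gradJ x - gradJ y‖ ≤ L * ‖x - y‖) (x u : E) :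
    J x + ⟪gradJ x, u⟫_ℝ - L / 2 * ‖u‖ ^ 2 ≤ J (x + u) := by
  let f : ℝ → ℝ := fun t => J (x + t • u) - t * ⟪gradJ x, u⟫_ℝ + L * t ^ 2 / 2 * ‖u‖ ^ 2
  let f' : ℝ → ℝ := fun t => ⟪gradJ (x + t • u) - gradJ x, u⟫_ℝ + L * t * ‖u‖ ^ 2
  have hf : ∀ t, HasDerivAt f (f' t) t := by
    intro t
    have hsum := (((hgrad (x + t • u)).hasDerivAt_comp_add_smul).sub
      ((hasDerivAt_id t).mul_const ⟪gradJ x, u⟫_ℝ)).add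
      ((((hasDerivAt_pow 2 t).const_mul L).div_const 2).mul_const (‖u‖ ^ 2))
    refine hsum.congr_deriv ?_
    simp only [f', inner_sub_left]
    ring
  have hf'_nonneg : ∀ t ∈ interior (Set.Ici (0 : ℝ)), 0 ≤ f' t := by
    intro t ht
    rw [interior_Ici] at ht
    have hgap : ‖gradJ (x + t • u) - gradJ x‖ ≤ L * (t * ‖u‖) := by
      simpa [norm_smul, abs_of_pos (Set.mem_Ioi.1 ht)] using hLip (x + t • u) x
    have hcs := neg_le_of_abs_le (abs_real_inner_le_norm (gradJ (x + t • u) - gradJ x) u)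
    nlinarith [mul_le_mul_of_nonneg_right hgap (norm_nonneg u)]
  have hmono : MonotoneOn f (Set.Ici 0) :=
    monotoneOn_of_hasDerivWithinAt_nonneg (convex_Ici 0)
      (fun t _ => (hf t).continuousAt.continuousWithinAt)
      (fun t _ => (hf t).hasDerivWithinAt) hf'_nonneg
  have h01 : f 0 ≤ f 1 := hmono (Set.mem_Ici.2 le_rfl) (Set.mem_Ici.2 zero_le_one) zero_le_one
  simp only [f, zero_smul, add_zero, one_smul] at h01
  linarith

end LipschitzGradient

section RelativeError

variable {E : Type*} [NormedAddCommGroup E] {v g : E} {α : ℝ}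

theorem norm_le_add_mul_norm_of_norm_sub_le (hg : ‖g - v‖ ≤ α * ‖v‖) :
    ‖g‖ ≤ (1 + α) * ‖v‖ := by
  linarith [norm_le_norm_add_norm_sub' g v]

variable [InnerProductSpace ℝ E]

theorem sub_mul_norm_sq_le_inner_of_norm_sub_le (hg : ‖g - v‖ ≤ α * ‖v‖) :
    (1 - α) * ‖v‖ ^ 2 ≤ ⟪v, g⟫_ℝ := by
  have hsplit : ⟪v, g⟫_ℝ = ‖v‖ ^ 2 + ⟪v, g - v⟫_ℝ := by
    rw [inner_sub_right, real_inner_self_eq_norm_sq]; ring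
  have herr := neg_le_of_abs_le (abs_real_inner_le_norm v (g - v))
  nlinarith [mul_le_mul_of_nonneg_left hg (norm_nonneg v)]

theorem half_mul_norm_smul_sq_le_inner_smul {L η : ℝ} (hg : ‖g - v‖ ≤ α * ‖v‖)
    (hL : 0 ≤ L) (hη0 : 0 ≤ η) (hη : L * η / 2 * (1 + α) ^ 2 ≤ 1 - α) :
    L / 2 * ‖η • g‖ ^ 2 ≤ ⟪v, η • g⟫_ℝ := by
  have hnorm := norm_le_add_mul_norm_of_norm_sub_le hg
  have hsq : ‖g‖ ^ 2 ≤ ((1 + α) * ‖v‖) ^ 2 := pow_le_pow_left₀ (norm_nonneg g) hnorm 2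
  rw [norm_smul, Real.norm_of_nonneg hη0, inner_smul_right]
  calc L / 2 * (η * ‖g‖) ^ 2 = L / 2 * η ^ 2 * ‖g‖ ^ 2 := by ring
    _ ≤ L / 2 * η ^ 2 * ((1 + α) * ‖v‖) ^ 2 := by gcongr
    _ = η * ‖v‖ ^ 2 * (L * η / 2 * (1 + α) ^ 2) := by ring
    _ ≤ η * ‖v‖ ^ 2 * (1 - α) := by gcongr
    _ = η * ((1 - α) * ‖v‖ ^ 2) := by ring
    _ ≤ η * ⟪v, g⟫_ℝ := by gcongr; exact sub_mul_norm_sq_le_inner_of_norm_sub_le hg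

end RelativeError

theorem ascent_step_nondecreasing_general
    {E : Type*} [NormedAddCommGroup E] [InnerProductSpace ℝ E] [CompleteSpace E]
    (J : E → ℝ) (gradJ : E → E)
    (hgrad : ∀ x, HasGradientAt J (gradJ x) x)
    (L : ℝ) (hL : 0 < L)
    (hLip : ∀ x y, ‖gradJ x - gradJ y‖ ≤ L * ‖x - y‖)
    (φ g : E) (α : ℝ) (hα0 : 0 < α)
    (hg : ‖g - gradJ φ‖ ≤ α * ‖gradJ φ‖)
    (η : ℝ) (hη0 : 0 < η) (hη : η ≤ 2 / L * ((1 - α) / (1 + α) ^ 2)) :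
    J φ ≤ J (φ + η • g) := by
  have hstep : L * η / 2 * (1 + α) ^ 2 ≤ 1 - α := by
    calc L * η / 2 * (1 + α) ^ 2 = L / 2 * (1 + α) ^ 2 * η := by ring
      _ ≤ L / 2 * (1 + α) ^ 2 * (2 / L * ((1 - α) / (1 + α) ^ 2)) := by gcongr
      _ = 1 - α := by field_simp
  have hgain := half_mul_norm_smul_sq_le_inner_smul hg hL.le hη0.le hstep
  linarith [le_apply_add_of_lipschitz_gradient hgrad hLip φ (η • g)]

/-- Abstract core of Proposition 1: an ascent step along an `α`-relatively-accurate
estimate `g` of the gradient of an objective `J` with `L`-Lipschitz gradient does not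
decrease the objective, provided `η ≤ (2/L) * (1-α)/(1+α)^2`. -/
theorem ascent_step_nondecreasing
    {E : Type*} [NormedAddCommGroup E] [InnerProductSpace ℝ E] [CompleteSpace E]
    (J : E → ℝ) (gradJ : E → E)
    (hgrad : ∀ x, HasGradientAt J (gradJ x) x)
    (L : ℝ) (hL : 0 < L)
    (hLip : ∀ x y, ‖gradJ x - gradJ y‖ ≤ L * ‖x - y‖)
    (φ g : E) (α : ℝ) (hα0 : 0 < α) (hα1 : α < 1)
    (hg : ‖g - gradJ φ‖ ≤ α * ‖gradJ φ‖)
    (η : ℝ) (hη0 : 0 < η) (hη : η ≤ 2 / L * ((1 - α) / (1 + α) ^ 2)) :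
    J φ ≤ J (φ + η • g) :=
  ascent_step_nondecreasing_general J gradJ hgrad L hL hLip φ g α hα0 hg η hη0 hη
end

section
/- Let $(\Omega, \mathcal{F}, P)$ be a probability space. Let $\mu : \mathbb{R}^p \times \Omega \to \mathbb{R}^m$ be such that for each $\omega$, $\phi \mapsto \mu(\phi, \omega)$ is differentiable with derivative $D_\phi \mu(\phi, \omega)$ satisfying $\|D_\phi \mu(\phi, \omega)\| \le \sigma_\mu$ (operator norm) and $\|D_\phi \mu(\phi_1, \omega) - D_\phi \mu(\phi_2, \omega)\| \le \kappa_\mu \|\phi_1 - \phi_2\|$. Let $Q : \Omega \times \mathbb{R}^m \to \mathbb{R}$ be such that for each $\omega$, $a \mapsto Q(\omega, a)$ is differentiable with $\|\nabla_a Q(\omega, a)\| \le \sigma_q$ and $\|\nabla_a Q(\omega, a_1) - \nabla_a Q(\omega, a_2)\| \le \kappa_q \|a_1 - a_2\|$. Define $J(\phi) = \int_\Omega Q(\omega, \mu(\phi, \omega)) \, dP(\omega)$, and assume $J$ is differentiable with $\nabla J(\phi) = \int_\Omega D_\phi \mu(\phi, \omega)^\top \nabla_a Q(\omega, \mu(\phi,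 \omega)) \, dP(\omega)$ for all $\phi$ (all integrands being integrable). Suppose $G \in \mathbb{R}^p$ satisfies $\|G - \nabla J(\phi)\| \le \alpha \|\nabla J(\phi)\|$ for some $0 < \alpha < 1$. Then, setting $L = \kappa_q \sigma_\mu^2 + \kappa_\mu \sigma_q$, for every step size $0 < \eta \le \frac{2}{L} \cdot \frac{1-\alpha}{(1+\alpha)^2}$, the ascent step $\phi' = \phi + \eta G$ satisfies $J(\phi') \ge J(\phi)$. -/
/-!
The gradient of `J` is the `P`-average of `φ ↦ Dμ(φ, ω)ᵀ ∇Q(ω, μ(φ, ω))`. Each of these is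
`L`-Lipschitz, `L = κq σμ² + κμ σq`: split the difference as
`Dμ(φ₁)ᵀ (∇Q(μ(φ₁)) - ∇Q(μ(φ₂))) + (Dμ(φ₁) - Dμ(φ₂))ᵀ ∇Q(μ(φ₂))`, and `μ` is `σμ`-Lipschitz by
the mean value theorem. Hence `∇J` is `L`-Lipschitz and the descent lemma gives
`J(φ + ηG) ≥ J(φ) + η⟪∇J, G⟫ - (L/2) η² ‖G‖²`. The relative error bound yields
`⟪∇J, G⟫ ≥ (1 - α) ‖∇J‖²` and `‖G‖ ≤ (1 + α) ‖∇J‖`, so the increment is at least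
`η ‖∇J‖² ((1 - α) - L η (1 + α)² / 2) ≥ 0` for the given step sizes.
-/

open MeasureTheory
open scoped InnerProductSpace NNReal

section Descent

variable {E : Type*} [NormedAddCommGroup E] [InnerProductSpace ℝ E]

theorem one_sub_mul_sq_le_inner_of_norm_sub_le {g G : E} {α : ℝ} (h : ‖G - g‖ ≤ α * ‖g‖) :
    (1 - α) * ‖g‖ ^ 2 ≤ ⟪g, G⟫_ℝ := by
  have hcs : -(‖g‖ * ‖G - g‖) ≤ ⟪g, G - g⟫_ℝ := (abs_le.mp (abs_real_inner_le_norm g (G - g))).1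
  have hsplit : ⟪g, G⟫_ℝ = ‖g‖ ^ 2 + ⟪g, G - g⟫_ℝ := by
    rw [inner_sub_right, real_inner_self_eq_norm_sq]; ring
  nlinarith [mul_le_mul_of_nonneg_left h (norm_nonneg g)]

theorem norm_le_one_add_mul_of_norm_sub_le {F : Type*} [SeminormedAddCommGroup F] {g G : F}
    {α : ℝ} (h : ‖G - g‖ ≤ α * ‖g‖) : ‖G‖ ≤ (1 + α) * ‖g‖ :=
  calc ‖G‖ ≤ ‖G - g‖ + ‖g‖ := norm_le_norm_sub_add G g
    _ ≤ (1 + α) * ‖g‖ := by linarith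

variable [CompleteSpace E]

theorem quadratic_lower_bound_of_lipschitzWith_gradient {f : E → ℝ} {g : E → E} {K : ℝ≥0}
    (hf : ∀ x, HasGradientAt f (g x) x) (hg : LipschitzWith K g) (x v : E) :
    f x + ⟪g x, v⟫_ℝ - K / 2 * ‖v‖ ^ 2 ≤ f (x + v) := by
  -- the claim is `h 0 ≤ h 1`; `h' ≥ 0` on `t ≥ 0` by Cauchy–Schwarz and the Lipschitz bound
  set h : ℝ → ℝ := fun t => f (x + t • v) - t * ⟪g x, v⟫_ℝ + K / 2 * t ^ 2 * ‖v‖ ^ 2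
  set h' : ℝ → ℝ := fun t => ⟪g (x + t • v), v⟫_ℝ - ⟪g x, v⟫_ℝ + K * t * ‖v‖ ^ 2
  have hderiv : ∀ t, HasDerivAt h (h' t) t := by
    intro t
    have hline : HasDerivAt (fun s : ℝ => x + s • v) v t := by
      simpa using ((hasDerivAt_id t).smul_const v).const_add x
    have hcomp := (hf (x + t • v)).hasFDerivAt.comp_hasDerivAt t hline
    simp only [InnerProductSpace.toDual_apply_apply] at hcomp
    refine ((hcomp.sub ((hasDerivAt_id t).mul_const ⟪g x, v⟫_ℝ)).add
      (((hasDerivAt_pow 2 t).const_mul (K / 2 : ℝ)).mul_const (‖v‖ ^ 2))).congr_deriv ?_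
    simp only [h', Nat.cast_ofNat]; ring
  have hnonneg : ∀ t ∈ interior (Set.Ici (0 : ℝ)), 0 ≤ h' t := by
    intro t ht
    rw [interior_Ici] at ht
    have hlip : ‖g (x + t • v) - g x‖ ≤ K * (t * ‖v‖) := by
      simpa [norm_smul, abs_of_pos (show (0:ℝ) < t from ht)] using hg.norm_sub_le (x + t • v) x
    have hcs : ⟪g x - g (x + t • v), v⟫_ℝ ≤ ‖g (x + t • v) - g x‖ * ‖v‖ := by
      simpa only [norm_sub_rev] using real_inner_le_norm (g x - g (x + t • v)) v
    rw [inner_sub_left] at hcs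
    nlinarith [norm_nonneg v]
  have hmono : MonotoneOn h (Set.Ici 0) :=
    monotoneOn_of_hasDerivWithinAt_nonneg (convex_Ici 0)
      (fun t _ => (hderiv t).continuousAt.continuousWithinAt)
      (fun t _ => (hderiv t).hasDerivWithinAt) hnonneg
  have h01 := hmono Set.self_mem_Ici (Set.mem_Ici.mpr zero_le_one) zero_le_one
  norm_num [h] at h01
  linarith

theorem le_image_add_smul_of_lipschitzWith_gradient {f : E → ℝ} {g : E → E} {K : ℝ≥0}
    (hf : ∀ x, HasGradientAt f (g x) x) (hg : LipschitzWith K g) {x G : E} {α η : ℝ}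
    (hG : ‖G - g x‖ ≤ α * ‖g x‖) (hη0 : 0 ≤ η) (hη : K * η * (1 + α) ^ 2 ≤ 2 * (1 - α)) :
    f x ≤ f (x + η • G) := by
  have hdescent := quadratic_lower_bound_of_lipschitzWith_gradient hf hg x (η • G)
  rw [real_inner_smul_right, norm_smul, Real.norm_of_nonneg hη0, mul_pow] at hdescent
  have hinner := one_sub_mul_sq_le_inner_of_norm_sub_le hG
  have hnorm : ‖G‖ ^ 2 ≤ (1 + α) ^ 2 * ‖g x‖ ^ 2 := by
    rw [← mul_pow]
    exact pow_le_pow_left₀ (norm_nonneg G) (norm_le_one_add_mul_of_norm_sub_le hG) 2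
  have hgain : 0 ≤ η * ⟪g x, G⟫_ℝ - K / 2 * (η ^ 2 * ‖G‖ ^ 2) :=
    calc (0 : ℝ) ≤ η * ‖g x‖ ^ 2 / 2 * (2 * (1 - α) - K * η * (1 + α) ^ 2) := by
          have := sq_nonneg ‖g x‖
          have := sub_nonneg.mpr hη
          positivity
      _ = η * ((1 - α) * ‖g x‖ ^ 2) - K / 2 * (η ^ 2 * ((1 + α) ^ 2 * ‖g x‖ ^ 2)) := by ring
      _ ≤ η * ⟪g x, G⟫_ℝ - K / 2 * (η ^ 2 * ‖G‖ ^ 2) := by gcongr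
  linarith

end Descent

theorem pos_and_mul_le_of_le_two_div_mul {L η α : ℝ} (hη0 : 0 < η) (hα1 : α < 1)
    (hη : η ≤ 2 / L * ((1 - α) / (1 + α) ^ 2)) :
    0 < L ∧ L * η * (1 + α) ^ 2 ≤ 2 * (1 - α) := by
  have hL : 0 < L := by
    by_contra! hL
    have : 2 / L * ((1 - α) / (1 + α) ^ 2) ≤ 0 :=
      mul_nonpos_of_nonpos_of_nonneg (div_nonpos_of_nonneg_of_nonpos zero_le_two hL)
        (div_nonneg (by linarith) (sq_nonneg _))
    linarith
  refine ⟨hL, ?_⟩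
  rw [div_mul_div_comm] at hη
  have := mul_le_of_le_div₀ (by linarith) (by positivity) hη
  linarith

theorem norm_adjoint_apply_sub_le {E F : Type*} [NormedAddCommGroup E] [InnerProductSpace ℝ E]
    [CompleteSpace E] [NormedAddCommGroup F] [InnerProductSpace ℝ F] [CompleteSpace F]
    (A B : E →L[ℝ] F) (u v : F) :
    ‖A.adjoint u - B.adjoint v‖ ≤ ‖A‖ * ‖u - v‖ + ‖A - B‖ * ‖v‖ := by
  have hsplit : A.adjoint u - B.adjoint v = A.adjoint (u - v) + (A - B).adjoint v := by
    simp only [map_sub, sub_apply]; abel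
  rw [hsplit]
  refine (norm_add_le _ _).trans (add_le_add ?_ ?_)
  · simpa only [LinearIsometryEquiv.norm_map] using A.adjoint.le_opNorm (u - v)
  · simpa only [LinearIsometryEquiv.norm_map] using (A - B).adjoint.le_opNorm v

theorem lipschitzWith_adjoint_apply_comp {E F : Type*} [NormedAddCommGroup E]
    [InnerProductSpace ℝ E] [CompleteSpace E] [NormedAddCommGroup F] [InnerProductSpace ℝ F]
    [CompleteSpace F] {μ : E → F} {D : E → E →L[ℝ] F} {g : F → F} {σμ κμ σq κq : ℝ}
    (hμ : ∀ x, HasFDerivAt μ (D x) x) (hD : ∀ x, ‖D x‖ ≤ σμ)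
    (hDLip : ∀ x y, ‖D x - D y‖ ≤ κμ * ‖x - y‖) (hg : ∀ a, ‖g a‖ ≤ σq)
    (hgLip : ∀ a b, ‖g a - g b‖ ≤ κq * ‖a - b‖) :
    LipschitzWith (κq * σμ ^ 2 + κμ * σq).toNNReal fun x => (D x).adjoint (g (μ x)) := by
  refine LipschitzWith.of_dist_le_mul fun x y => ?_
  rw [dist_eq_norm, dist_eq_norm]
  by_cases hκq : 0 ≤ κq
  · have hσμ : 0 ≤ σμ := (norm_nonneg _).trans (hD x)
    have hμLip : ‖μ x - μ y‖ ≤ σμ * ‖x - y‖ :=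
      convex_univ.norm_image_sub_le_of_norm_hasFDerivWithin_le
        (fun z _ => (hμ z).hasFDerivWithinAt) (fun z _ => hD z) (Set.mem_univ y) (Set.mem_univ x)
    calc ‖(D x).adjoint (g (μ x)) - (D y).adjoint (g (μ y))‖
        ≤ ‖D x‖ * ‖g (μ x) - g (μ y)‖ + ‖D x - D y‖ * ‖g (μ y)‖ := norm_adjoint_apply_sub_le _ _ _ _
      _ ≤ σμ * (κq * (σμ * ‖x - y‖)) + κμ * ‖x - y‖ * σq := by
          gcongr
          · exact hD x
          · exact (hgLip _ _).trans (by gcongr)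
          · exact (norm_nonneg _).trans (hDLip x y)
          · exact hDLip x y
          · exact hg _
      _ = (κq * σμ ^ 2 + κμ * σq) * ‖x - y‖ := by ring
      _ ≤ (κq * σμ ^ 2 + κμ * σq).toNNReal * ‖x - y‖ := by
          gcongr; exact Real.le_coe_toNNReal _
  · -- a negative Lipschitz constant for `g` forces `F` to be trivial
    have hF : ∀ a : F, a = 0 := fun a => by
      have h := hgLip a 0
      rw [sub_zero] at h
      exact norm_le_zero_iff.mp (by nlinarith [norm_nonneg (g a - g 0), norm_nonneg a])
    simp only [hF (g _), map_zero, sub_self, norm_zero]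
    positivity

theorem lipschitzWith_integral {X Ω F : Type*} [PseudoMetricSpace X] [MeasurableSpace Ω]
    {P : Measure Ω} [IsProbabilityMeasure P] [NormedAddCommGroup F] [NormedSpace ℝ F]
    {f : X → Ω → F} {K : ℝ≥0} (hf : ∀ x, Integrable (f x) P)
    (hK : ∀ ω, LipschitzWith K fun x => f x ω) :
    LipschitzWith K fun x => ∫ ω, f x ω ∂P := by
  refine LipschitzWith.of_dist_le_mul fun x y => ?_
  rw [dist_eq_norm, ← integral_sub (hf x) (hf y)]
  calc ‖∫ ω, (f x ω - f y ω) ∂P‖ ≤ ∫ ω, ‖f x ω - f y ω‖ ∂P := norm_integral_le_integral_norm _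
    _ ≤ ∫ _ω, K * dist x y ∂P :=
        integral_mono ((hf x).sub (hf y)).norm (integrable_const _)
          fun ω => by simpa only [dist_eq_norm] using (hK ω).dist_le_mul x y
    _ = K * dist x y := by simp

theorem positive_empirical_advantage_general
    {p m : ℕ} {Ω : Type*} [MeasurableSpace Ω] (P : Measure Ω) [IsProbabilityMeasure P]
    (μ : EuclideanSpace ℝ (Fin p) → Ω → EuclideanSpace ℝ (Fin m))
    (Dμ : EuclideanSpace ℝ (Fin p) → Ω →
      (EuclideanSpace ℝ (Fin p) →L[ℝ] EuclideanSpace ℝ (Fin m)))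
    (hμ : ∀ φ ω, HasFDerivAt (fun ψ => μ ψ ω) (Dμ φ ω) φ)
    (σμ κμ σq κq : ℝ)
    (hDbd : ∀ φ ω, ‖Dμ φ ω‖ ≤ σμ)
    (hDLip : ∀ ω φ₁ φ₂, ‖Dμ φ₁ ω - Dμ φ₂ ω‖ ≤ κμ * ‖φ₁ - φ₂‖)
    (gQ : Ω → EuclideanSpace ℝ (Fin m) → EuclideanSpace ℝ (Fin m))
    (hgbd : ∀ ω a, ‖gQ ω a‖ ≤ σq)
    (hgLip : ∀ ω a₁ a₂, ‖gQ ω a₁ - gQ ω a₂‖ ≤ κq * ‖a₁ - a₂‖)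
    (J : EuclideanSpace ℝ (Fin p) → ℝ)
    (hIntG : ∀ φ, Integrable (fun ω => (Dμ φ ω).adjoint (gQ ω (μ φ ω))) P)
    (hJgrad : ∀ φ, HasGradientAt J (∫ ω, (Dμ φ ω).adjoint (gQ ω (μ φ ω)) ∂P) φ)
    (φ G : EuclideanSpace ℝ (Fin p)) (α : ℝ) (hα1 : α < 1)
    (hG : ‖G - ∫ ω, (Dμ φ ω).adjoint (gQ ω (μ φ ω)) ∂P‖ ≤
      α * ‖∫ ω, (Dμ φ ω).adjoint (gQ ω (μ φ ω)) ∂P‖)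
    (η : ℝ) (hη0 : 0 < η)
    (hη : η ≤ 2 / (κq * σμ ^ 2 + κμ * σq) * ((1 - α) / (1 + α) ^ 2)) :
    J φ ≤ J (φ + η • G) := by
  obtain ⟨hL, hstep⟩ := pos_and_mul_le_of_le_two_div_mul hη0 hα1 hη
  have hgradLip := lipschitzWith_integral hIntG fun ω =>
    lipschitzWith_adjoint_apply_comp (fun φ => hμ φ ω) (hDbd · ω) (hDLip ω) (hgbd ω) (hgLip ω)
  refine le_image_add_smul_of_lipschitzWith_gradient hJgrad hgradLip hG hη0.le ?_
  rwa [Real.coe_toNNReal _ hL.le]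

/-- The paper's Proposition 1 in full: for the averaged actor objective
`J(φ) = ∫ Q(ω, μ(φ, ω)) dP(ω)` with bounded Lipschitz policy derivative and bounded
Lipschitz action-gradient of `Q`, an ascent step along an `α`-relatively-accurate
averaged gradient estimate `G` with step size `η ≤ (2/L)(1-α)/(1+α)²`,
`L = κq σμ² + κμ σq`, does not decrease `J`. -/
theorem positive_empirical_advantage
    {p m : ℕ} {Ω : Type*} [MeasurableSpace Ω] (P : Measure Ω) [IsProbabilityMeasure P]
    (μ : EuclideanSpace ℝ (Fin p) → Ω → EuclideanSpace ℝ (Fin m))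
    (Dμ : EuclideanSpace ℝ (Fin p) → Ω →
      (EuclideanSpace ℝ (Fin p) →L[ℝ] EuclideanSpace ℝ (Fin m)))
    (hμ : ∀ φ ω, HasFDerivAt (fun ψ => μ ψ ω) (Dμ φ ω) φ)
    (σμ κμ σq κq : ℝ)
    (hDbd : ∀ φ ω, ‖Dμ φ ω‖ ≤ σμ)
    (hDLip : ∀ ω φ₁ φ₂, ‖Dμ φ₁ ω - Dμ φ₂ ω‖ ≤ κμ * ‖φ₁ - φ₂‖)
    (Q : Ω → EuclideanSpace ℝ (Fin m) → ℝ)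
    (gQ : Ω → EuclideanSpace ℝ (Fin m) → EuclideanSpace ℝ (Fin m))
    (hQ : ∀ ω a, HasGradientAt (Q ω) (gQ ω a) a)
    (hgbd : ∀ ω a, ‖gQ ω a‖ ≤ σq)
    (hgLip : ∀ ω a₁ a₂, ‖gQ ω a₁ - gQ ω a₂‖ ≤ κq * ‖a₁ - a₂‖)
    (J : EuclideanSpace ℝ (Fin p) → ℝ)
    (hJ : ∀ φ, J φ = ∫ ω, Q ω (μ φ ω) ∂P)
    (hIntQ : ∀ φ, Integrable (fun ω => Q ω (μ φ ω)) P)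
    (hIntG : ∀ φ, Integrable (fun ω => (Dμ φ ω).adjoint (gQ ω (μ φ ω))) P)
    (hJgrad : ∀ φ, HasGradientAt J (∫ ω, (Dμ φ ω).adjoint (gQ ω (μ φ ω)) ∂P) φ)
    (φ G : EuclideanSpace ℝ (Fin p)) (α : ℝ) (hα0 : 0 < α) (hα1 : α < 1)
    (hG : ‖G - ∫ ω, (Dμ φ ω).adjoint (gQ ω (μ φ ω)) ∂P‖ ≤
      α * ‖∫ ω, (Dμ φ ω).adjoint (gQ ω (μ φ ω)) ∂P‖)
    (η : ℝ) (hη0 : 0 < η)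
    (hη : η ≤ 2 / (κq * σμ ^ 2 + κμ * σq) * ((1 - α) / (1 + α) ^ 2)) :
    J φ ≤ J (φ + η • G) :=
  positive_empirical_advantage_general P μ Dμ hμ σμ κμ σq κq hDbd hDLip gQ hgbd hgLip J hIntG hJgrad
    φ G α hα1 hG η hη0 hη
end
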